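/- Monotonicity of the optimal variance under refinement: if a stratum with measure a and uniform standard deviation σ is split into sub-strata of measures b_1,...,b_m (Σ b_j = a) with uniform standard deviations s_1,...,s_m, then Σ_{j=1}^m b_j s_j ≤ a σ; hence the optimal stratified variance (1/N)(Σ over all strata of a_i σ_i)^2 never increases under refinement of the partition. -/

import Mathlib

open MeasureTheory

lemma key_cs {α : Type*} [MeasurableSpace α] (μ : Measure α) (S : Set α) (c : ℝ) (hc : 0 < c)
    (hvolS : μ S = ENNReal.ofReal c) (f : α → ℝ)
    (hf2 : IntegrableOn (fun x => f x ^ 2) S μ) :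
    (∫ x in S, f x ∂μ) ^ 2 ≤ c * ∫ x in S, f x ^ 2 ∂μ := by
  have hQ : 0 ≤ ∫ x in S, f x ^ 2 ∂μ := integral_nonneg fun x => sq_nonneg _
  by_cases hmeas : AEStronglyMeasurable f (μ.restrict S)
  · set P : Measure α := (ENNReal.ofReal c)⁻¹ • μ.restrict S with hP
    have hc0 : (ENNReal.ofReal c) ≠ 0 := by
      exact (ENNReal.ofReal_pos.mpr hc).ne'
    have hProb : IsProbabilityMeasure P := by
      constructor
      rw [hP, Measure.smul_apply, Measure.restrict_apply_univ, hvolS, smul_eq_mul,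
        ENNReal.inv_mul_cancel hc0 ENNReal.ofReal_ne_top]
    have hac : P ≪ μ.restrict S := by
      rw [hP]; exact Measure.smul_absolutelyContinuous
    have hmem : MemLp f 2 P := by
      rw [memLp_two_iff_integrable_sq (hmeas.mono_ac hac)]
      exact hf2.smul_measure (ENNReal.inv_ne_top.mpr hc0)
    have hvar := ProbabilityTheory.variance_nonneg f P
    rw [ProbabilityTheory.variance_eq_sub hmem] at hvar
    have h1 : ∫ x, f x ∂P = c⁻¹ * ∫ x in S, f x ∂μ := by
      rw [hP, integral_smul_measure, ENNReal.toReal_inv, ENNReal.toReal_ofReal hc.le,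
        smul_eq_mul]
    have h2 : ∫ x, (f ^ 2) x ∂P = c⁻¹ * ∫ x in S, f x ^ 2 ∂μ := by
      rw [hP, integral_smul_measure, ENNReal.toReal_inv, ENNReal.toReal_ofReal hc.le,
        smul_eq_mul]
      norm_num [Pi.pow_apply]
    rw [h1, h2] at hvar
    have hfin : c ^ 2 * (c⁻¹ * ∫ x in S, f x ^ 2 ∂μ - (c⁻¹ * ∫ x in S, f x ∂μ) ^ 2)
        = c * (∫ x in S, f x ^ 2 ∂μ) - (∫ x in S, f x ∂μ) ^ 2 := by
      field_simp
    nlinarith [mul_nonneg (sq_nonneg c) hvar]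
  · have : ¬ Integrable f (μ.restrict S) := fun h => hmeas h.aestronglyMeasurable
    rw [integral_undef this]
    simpa using mul_nonneg hc.le hQ

/-- monotonicity of the optimal variance under refinement: if a stratum of
measure `a` and uniform standard deviation `σ` is split into parts of measures `b j` with
standard deviations `s j`, then `∑ j b j * s j ≤ a * σ`. -/
theorem refinement_optimal_monotone (d m : ℕ) (hd : 1 ≤ d) (hm : 1 ≤ m)
    (Di : Set (Fin d → ℝ)) (hDi : MeasurableSet Di)
    (E : Fin m → Set (Fin d → ℝ)) (hE : ∀ j, MeasurableSet (E j))
    (hcover : (⋃ j, E j) = Di) (hdisj : Pairwise (Function.onFun Disjoint E))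
    (a : ℝ) (ha : 0 < a) (hvol : volume Di = ENNReal.ofReal a)
    (b : Fin m → ℝ) (hb : ∀ j, 0 < b j)
    (hvolE : ∀ j, volume (E j) = ENNReal.ofReal (b j))
    (f : (Fin d → ℝ) → ℝ) (hf2 : IntegrableOn (fun x => f x ^ 2) Di)
    (σ : ℝ)
    (hσ : σ = Real.sqrt ((∫ x, f x ^ 2 ∂((ENNReal.ofReal a)⁻¹ • volume.restrict Di))
        - (∫ x, f x ∂((ENNReal.ofReal a)⁻¹ • volume.restrict Di)) ^ 2))
    (s : Fin m → ℝ)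
    (hs : ∀ j, s j
        = Real.sqrt ((∫ x, f x ^ 2 ∂((ENNReal.ofReal (b j))⁻¹ • volume.restrict (E j)))
          - (∫ x, f x ∂((ENNReal.ofReal (b j))⁻¹ • volume.restrict (E j))) ^ 2)) :
    ∑ j, b j * s j ≤ a * σ := by
  -- notations
  set Q : ℝ := ∫ x in Di, f x ^ 2 with hQdef
  set I : ℝ := ∫ x in Di, f x with hIdef
  set Qj : Fin m → ℝ := fun j => ∫ x in E j, f x ^ 2 with hQjdef
  set Ij : Fin m → ℝ := fun j => ∫ x in E j, f x with hIjdef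
  have hEsub : ∀ j, E j ⊆ Di := by
    intro j; rw [← hcover]; exact Set.subset_iUnion E j
  have hf2j : ∀ j, IntegrableOn (fun x => f x ^ 2) (E j) := fun j => hf2.mono_set (hEsub j)
  have keyj : ∀ j, (Ij j) ^ 2 ≤ b j * Qj j := fun j =>
    key_cs volume (E j) (b j) (hb j) (hvolE j) f (hf2j j)
  have keyD : I ^ 2 ≤ a * Q := key_cs volume Di a ha hvol f hf2
  have hQjnn : ∀ j, 0 ≤ Qj j := fun j => integral_nonneg fun x => sq_nonneg _
  -- sum of f² integrals
  have hQsum : Q = ∑ j, Qj j := by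
    rw [hQdef, ← hcover, integral_iUnion hE hdisj (hcover ▸ hf2), tsum_fintype]
  -- key mean inequality
  have hImean : I ^ 2 ≤ a * ∑ j, (Ij j) ^ 2 / b j := by
    by_cases hmeas : AEStronglyMeasurable f (volume.restrict Di)
    · have hfin : IsFiniteMeasure (volume.restrict Di) := by
        constructor
        rw [Measure.restrict_apply_univ, hvol]
        exact ENNReal.ofReal_lt_top
      have hmem : MemLp f 2 (volume.restrict Di) :=
        (memLp_two_iff_integrable_sq hmeas).mpr hf2
      have hint : IntegrableOn f Di := hmem.integrable (by norm_num)
      have hIsum : I = ∑ j, Ij j := by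
        rw [hIdef, ← hcover, integral_iUnion hE hdisj (hcover ▸ hint), tsum_fintype]
      have hcs := Finset.sum_mul_sq_le_sq_mul_sq Finset.univ
        (fun j => Real.sqrt (b j)) (fun j => Ij j / Real.sqrt (b j))
      have e1 : ∀ j : Fin m, Real.sqrt (b j) * (Ij j / Real.sqrt (b j)) = Ij j := by
        intro j
        rw [mul_div_cancel₀]
        exact (Real.sqrt_pos.mpr (hb j)).ne'
      have e2 : ∀ j : Fin m, Real.sqrt (b j) ^ 2 = b j := fun j => Real.sq_sqrt (hb j).le
      have e3 : ∀ j : Fin m, (Ij j / Real.sqrt (b j)) ^ 2 = (Ij j) ^ 2 / b j := by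
        intro j
        rw [div_pow, Real.sq_sqrt (hb j).le]
      simp only [e1, e2, e3] at hcs
      have hasum : ∑ j : Fin m, b j = a := by
        have : ENNReal.ofReal a = ∑ j : Fin m, ENNReal.ofReal (b j) := by
          rw [← hvol, ← hcover, measure_iUnion (hdisj.mono fun _ _ h => h) hE, tsum_fintype]
          simp [hvolE]
        have h2 : ENNReal.ofReal a = ENNReal.ofReal (∑ j : Fin m, b j) := by
          rw [this, ENNReal.ofReal_sum_of_nonneg fun j _ => (hb j).le]
        have := congrArg ENNReal.toReal h2
        rwa [ENNReal.toReal_ofReal ha.le,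
          ENNReal.toReal_ofReal (Finset.sum_nonneg fun j _ => (hb j).le), eq_comm] at this
      rw [hIsum]
      calc (∑ j, Ij j) ^ 2 ≤ (∑ j : Fin m, b j) * ∑ j, (Ij j) ^ 2 / b j := hcs
        _ = a * ∑ j, (Ij j) ^ 2 / b j := by rw [hasum]
    · have : ¬ Integrable f (volume.restrict Di) := fun h => hmeas h.aestronglyMeasurable
      have hI0 : I = 0 := integral_undef this
      rw [hI0]
      have h0 : ((0:ℝ)) ^ 2 = 0 := by norm_num
      rw [h0]
      exact mul_nonneg ha.le (Finset.sum_nonneg fun j _ => div_nonneg (sq_nonneg _) (hb j).le)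
  -- variances
  set V : ℝ := a⁻¹ * Q - (a⁻¹ * I) ^ 2 with hVdef
  set Vj : Fin m → ℝ := fun j => (b j)⁻¹ * Qj j - ((b j)⁻¹ * Ij j) ^ 2 with hVjdef
  have hV0 : 0 ≤ V := by
    rw [hVdef]
    have h1 : a ^ 2 * (a⁻¹ * Q - (a⁻¹ * I) ^ 2) = a * Q - I ^ 2 := by
      field_simp
    nlinarith [keyD, h1, mul_pos ha ha]
  have hVj0 : ∀ j, 0 ≤ Vj j := by
    intro j
    rw [hVjdef]
    have h1 : (b j) ^ 2 * ((b j)⁻¹ * Qj j - ((b j)⁻¹ * Ij j) ^ 2) = b j * Qj j - Ij j ^ 2 := by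
      field_simp [(hb j).ne']
    nlinarith [keyj j, h1, mul_pos (hb j) (hb j)]
  have hσV : σ = Real.sqrt V := by
    rw [hσ, hVdef]
    congr 1
    rw [integral_smul_measure, integral_smul_measure, ENNReal.toReal_inv,
      ENNReal.toReal_ofReal ha.le, smul_eq_mul, smul_eq_mul, mul_pow]
  have hsV : ∀ j, s j = Real.sqrt (Vj j) := by
    intro j
    rw [hs j, hVjdef]
    congr 1
    rw [integral_smul_measure, integral_smul_measure, ENNReal.toReal_inv,
      ENNReal.toReal_ofReal (hb j).le, smul_eq_mul, smul_eq_mul, mul_pow]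
    ring
  -- total variance inequality: ∑ b j * Vj j ≤ a * V
  have htot : ∑ j, b j * Vj j ≤ a * V := by
    have e4 : ∀ j : Fin m, b j * Vj j = Qj j - (Ij j) ^ 2 / b j := by
      intro j
      rw [hVjdef]
      field_simp [(hb j).ne']
    have e5 : a * V = Q - I ^ 2 / a := by
      rw [hVdef]; field_simp [ha.ne']
    simp only [e4, e5, Finset.sum_sub_distrib]
    rw [← hQsum]
    have : I ^ 2 / a ≤ ∑ j, (Ij j) ^ 2 / b j := by
      rw [div_le_iff₀ ha]
      calc I ^ 2 ≤ a * ∑ j, (Ij j) ^ 2 / b j := hImean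
        _ = (∑ j, (Ij j) ^ 2 / b j) * a := mul_comm _ _
    linarith
  -- final Cauchy–Schwarz
  have hsnn : ∀ j, 0 ≤ s j := fun j => (hsV j) ▸ Real.sqrt_nonneg _
  have hsumnn : 0 ≤ ∑ j, b j * s j :=
    Finset.sum_nonneg fun j _ => mul_nonneg (hb j).le (hsnn j)
  have hσnn : 0 ≤ σ := hσV ▸ Real.sqrt_nonneg _
  have hs2 : ∀ j, s j ^ 2 = Vj j := fun j => by rw [hsV j, Real.sq_sqrt (hVj0 j)]
  have hσ2 : σ ^ 2 = V := by rw [hσV, Real.sq_sqrt hV0]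
  have hcs2 := Finset.sum_mul_sq_le_sq_mul_sq Finset.univ
    (fun j => Real.sqrt (b j)) (fun j => Real.sqrt (b j) * s j)
  have e6 : ∀ j : Fin m, Real.sqrt (b j) * (Real.sqrt (b j) * s j) = b j * s j := by
    intro j
    rw [← mul_assoc, Real.mul_self_sqrt (hb j).le]
  have e7 : ∀ j : Fin m, (Real.sqrt (b j) * s j) ^ 2 = b j * Vj j := by
    intro j
    rw [mul_pow, Real.sq_sqrt (hb j).le, hs2 j]
  have e8 : ∀ j : Fin m, Real.sqrt (b j) ^ 2 = b j := fun j => Real.sq_sqrt (hb j).le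
  simp only [e6, e7, e8] at hcs2
  have hasum : ∑ j : Fin m, b j = a := by
    have : ENNReal.ofReal a = ∑ j : Fin m, ENNReal.ofReal (b j) := by
      rw [← hvol, ← hcover, measure_iUnion (hdisj.mono fun _ _ h => h) hE, tsum_fintype]
      simp [hvolE]
    have h2 : ENNReal.ofReal a = ENNReal.ofReal (∑ j : Fin m, b j) := by
      rw [this, ENNReal.ofReal_sum_of_nonneg fun j _ => (hb j).le]
    have := congrArg ENNReal.toReal h2
    rwa [ENNReal.toReal_ofReal ha.le,
      ENNReal.toReal_ofReal (Finset.sum_nonneg fun j _ => (hb j).le), eq_comm] at this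
  have hfinal : (∑ j, b j * s j) ^ 2 ≤ (a * σ) ^ 2 := by
    calc (∑ j, b j * s j) ^ 2 ≤ (∑ j : Fin m, b j) * ∑ j, b j * Vj j := hcs2
      _ = a * ∑ j, b j * Vj j := by rw [hasum]
      _ ≤ a * (a * V) := by
          exact mul_le_mul_of_nonneg_left htot ha.le
      _ = (a * σ) ^ 2 := by rw [mul_pow, hσ2]; ring
  calc ∑ j, b j * s j = Real.sqrt ((∑ j, b j * s j) ^ 2) := (Real.sqrt_sq hsumnn).symm
    _ ≤ Real.sqrt ((a * σ) ^ 2) := Real.sqrt_le_sqrt hfinal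
    _ = a * σ := Real.sqrt_sq (mul_nonneg ha.le hσnn)
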